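/- arXiv:2411.07596 — 12 statements merged into one kernel-verified Lean document; each statement's English description precedes it below -/
import Mathlib

section
/- For all nonnegative reals x₁, x₂, x₃, if (x₁+x₂+x₃)⁴ - 8(x₁³x₂ + x₁³x₃ + x₂x₃³) = 0, then x₁ = x₂ = x₃ = 0. -/
/-! On the nonnegative orthant the quartic is the sum of the squares
`(x₁² - 2x₁x₂ - 2x₁x₃)²`, `(x₃² - 2x₂x₃)²`, `x₂⁴` and of monomials with nonnegative coefficients.
If it vanishes, `x₂⁴ = 0` forces `x₂ = 0`, after which the two squares reduce to `x₃⁴` and `x₁⁴`. -/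

lemma sq_add_sq_add_pow_four_le_quartic {x₁ x₂ x₃ : ℝ} (h₁ : 0 ≤ x₁) (h₂ : 0 ≤ x₂) (h₃ : 0 ≤ x₃) :
    (x₁^2 - 2*x₁*x₂ - 2*x₁*x₃)^2 + (x₃^2 - 2*x₂*x₃)^2 + x₂^4 ≤
      (x₁+x₂+x₃)^4 - 8*(x₁^3*x₂ + x₁^3*x₃ + x₂*x₃^3) := by
  rw [← sub_nonneg]
  have rest : (x₁+x₂+x₃)^4 - 8*(x₁^3*x₂ + x₁^3*x₃ + x₂*x₃^3)
      - ((x₁^2 - 2*x₁*x₂ - 2*x₁*x₃)^2 + (x₃^2 - 2*x₂*x₃)^2 + x₂^4) =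
      4*x₁*x₂^3 + 4*x₂^3*x₃ + 4*x₁*x₃^3 + 2*x₁^2*x₂^2 + 2*x₁^2*x₃^2 + 2*x₂^2*x₃^2
      + 4*x₁^2*x₂*x₃ + 12*x₁*x₂^2*x₃ + 12*x₁*x₂*x₃^2 := by ring
  rw [rest]
  positivity

theorem stmt_4 (x₁ x₂ x₃ : ℝ) (h₁ : 0 ≤ x₁) (h₂ : 0 ≤ x₂) (h₃ : 0 ≤ x₃)
    (h : (x₁+x₂+x₃)^4 - 8*(x₁^3*x₂ + x₁^3*x₃ + x₂*x₃^3) = 0) :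
    x₁ = 0 ∧ x₂ = 0 ∧ x₃ = 0 := by
  have bound := sq_add_sq_add_pow_four_le_quartic h₁ h₂ h₃
  rw [h] at bound
  have squares_nonneg :=
    add_nonneg (sq_nonneg (x₁^2 - 2*x₁*x₂ - 2*x₁*x₃)) (sq_nonneg (x₃^2 - 2*x₂*x₃))
  have hx₂ : x₂ = 0 := pow_eq_zero_iff (n := 4) (by norm_num) |>.mp (by nlinarith [pow_nonneg h₂ 4])
  subst hx₂
  have hx₃ : x₃ = 0 := pow_eq_zero_iff (n := 4) (by norm_num) |>.mp (by nlinarith)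
  subst hx₃
  have hx₁ : x₁ = 0 := pow_eq_zero_iff (n := 4) (by norm_num) |>.mp (by nlinarith)
  exact ⟨hx₁, rfl, rfl⟩
end

section
/- For all nonnegative reals x₁, x₂, x₃, if (x₁+x₂+x₃)⁴ - 8(x₁x₂³ + x₁x₃³ + x₂x₃³) - 24x₁²x₂x₃ = 0, then x₁ = x₂ = x₃ = 0. -/
theorem stmt_5 (x₁ x₂ x₃ : ℝ) (h₁ : 0 ≤ x₁) (h₂ : 0 ≤ x₂) (h₃ : 0 ≤ x₃)
    (h : (x₁+x₂+x₃)^4 - 8*(x₁*x₂^3 + x₁*x₃^3 + x₂*x₃^3) - 24*x₁^2*x₂*x₃ = 0) :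
    x₁ = 0 ∧ x₂ = 0 ∧ x₃ = 0 := by
  have hS : (x₁^2+x₂^2+x₃^2)^2 ≤ 0 := by
    nlinarith [sq_nonneg (x₂*(x₂-3*x₁)),
      mul_nonneg (mul_nonneg h₁ h₂) (sq_nonneg (2*x₃-3*x₁)),
      mul_nonneg (mul_nonneg h₁ h₂) (sq_nonneg (x₂+x₃-3*x₁)),
      sq_nonneg (x₂*(2*x₂+3*x₃-3*x₁)),
      sq_nonneg (x₂*(3*x₃-3*x₁)),
      sq_nonneg (x₃*(x₃-2*x₁-3*x₂)),
      mul_nonneg (mul_nonneg h₁ h₃) (sq_nonneg (3*x₂-3*x₁)),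
      sq_nonneg (x₁*(2*x₃-3*x₁-x₂)),
      sq_nonneg (x₃*(3*x₂-3*x₁)),
      sq_nonneg (x₃*(x₃-3*x₁-3*x₂)),
      sq_nonneg (x₂*(x₂-3*x₁-3*x₃)),
      mul_nonneg (mul_nonneg h₁ h₃) (sq_nonneg (3*x₂+x₃-3*x₁)),
      sq_nonneg (x₂*(x₂-3*x₁-x₃)),
      mul_nonneg (mul_nonneg h₂ h₃) (sq_nonneg (x₃-2*x₁-3*x₂)),
      sq_nonneg (x₁*(2*x₃-3*x₁))]
  have hS0 : x₁^2+x₂^2+x₃^2 = 0 := by nlinarith [sq_nonneg (x₁^2+x₂^2+x₃^2), sq_nonneg x₁, sq_nonneg x₂, sq_nonneg x₃]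
  refine ⟨?_, ?_, ?_⟩ <;> nlinarith [sq_nonneg x₁, sq_nonneg x₂, sq_nonneg x₃]
end

section
/- For all nonnegative reals x₁, x₂, x₃, if (x₁+x₂+x₃)⁴ - 8(x₁x₂³ + x₁x₃³ + x₂x₃³) - 24x₁x₂x₃(x₁+x₂) = 0, then x₁ = x₂ = x₃ = 0. -/
/-!
In `d = x₃ - x₁ - x₂` the form is the depressed quartic
`d⁴ + 8(x₁³ + x₂³) d + 8(x₁⁴ + x₁³x₂ + x₂⁴)`. Completing squares,
`l (d⁴ + p d + r) ≥ l (r - l²) - p²/8` for every `l ≥ 0`, and the choice `l = 3(x₁² + x₂²)/2`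
turns the right-hand side into a binary sextic that dominates `(x₁⁶ + x₂⁶)/2` when `x₁, x₂ ≥ 0`.
So the form vanishes only if `x₁ = x₂ = 0`, and then it equals `x₃⁴`.
-/

def tensorQuartic (a b c : ℝ) : ℝ :=
  (a + b + c) ^ 4 - 8 * (a * b ^ 3 + a * c ^ 3 + b * c ^ 3) - 24 * a * b * c * (a + b)

theorem quartic_lower_bound {l : ℝ} (hl : 0 ≤ l) (p r x : ℝ) :
    l * (r - l ^ 2) - p ^ 2 / 8 ≤ l * (x ^ 4 + p * x + r) := by
  have completed_squares : 8 * l * (x ^ 4 + p * x + r) =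
      8 * l * (x ^ 2 - l) ^ 2 + (4 * l * x + p) ^ 2 + (8 * l * (r - l ^ 2) - p ^ 2) := by ring
  linarith [mul_nonneg hl (sq_nonneg (x ^ 2 - l)), sq_nonneg (4 * l * x + p)]

theorem tensorQuartic_eq (a b c : ℝ) :
    tensorQuartic a b c =
      (c - a - b) ^ 4 + 8 * (a ^ 3 + b ^ 3) * (c - a - b) + 8 * (a ^ 4 + a ^ 3 * b + b ^ 4) := by
  unfold tensorQuartic
  ring

theorem sixth_pow_add_sixth_pow_le {a b : ℝ} (ha : 0 ≤ a) (hb : 0 ≤ b) (c : ℝ) :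
    a ^ 6 + b ^ 6 ≤ 3 * (a ^ 2 + b ^ 2) * tensorQuartic a b c := by
  have hl : 0 ≤ 3 * (a ^ 2 + b ^ 2) / 2 := by positivity
  have bound :=
    quartic_lower_bound hl (8 * (a ^ 3 + b ^ 3)) (8 * (a ^ 4 + a ^ 3 * b + b ^ 4)) (c - a - b)
  rw [tensorQuartic_eq]
  calc a ^ 6 + b ^ 6
      ≤ a ^ 6 + b ^ 6 + ((a ^ 3 - b ^ 3) ^ 2 + 15 * (a * b * (a - b)) ^ 2 + 96 * a ^ 5 * b) / 4 :=
        le_add_of_nonneg_right (by positivity)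
    _ = 2 * (3 * (a ^ 2 + b ^ 2) / 2 *
            (8 * (a ^ 4 + a ^ 3 * b + b ^ 4) - (3 * (a ^ 2 + b ^ 2) / 2) ^ 2) -
          (8 * (a ^ 3 + b ^ 3)) ^ 2 / 8) := by ring
    _ ≤ _ := by linarith

theorem stmt_6_general (x₁ x₂ x₃ : ℝ) (h₁ : 0 ≤ x₁) (h₂ : 0 ≤ x₂)
    (h : (x₁+x₂+x₃)^4 - 8*(x₁*x₂^3 + x₁*x₃^3 + x₂*x₃^3) - 24*x₁*x₂*x₃*(x₁+x₂) = 0) :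
    x₁ = 0 ∧ x₂ = 0 ∧ x₃ = 0 := by
  have hsix := sixth_pow_add_sixth_pow_le h₁ h₂ x₃
  rw [show tensorQuartic x₁ x₂ x₃ = 0 from h, mul_zero] at hsix
  obtain ⟨hx₁, hx₂⟩ : x₁ ^ 6 = 0 ∧ x₂ ^ 6 = 0 :=
    (add_eq_zero_iff_of_nonneg (by positivity) (by positivity)).mp (le_antisymm hsix (by positivity))
  obtain rfl : x₁ = 0 := pow_eq_zero_iff (by norm_num) |>.mp hx₁
  obtain rfl : x₂ = 0 := pow_eq_zero_iff (by norm_num) |>.mp hx₂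
  exact ⟨rfl, rfl, pow_eq_zero_iff (n := 4) (by norm_num) |>.mp (by simpa using h)⟩

theorem stmt_6 (x₁ x₂ x₃ : ℝ) (h₁ : 0 ≤ x₁) (h₂ : 0 ≤ x₂) (h₃ : 0 ≤ x₃)
    (h : (x₁+x₂+x₃)^4 - 8*(x₁*x₂^3 + x₁*x₃^3 + x₂*x₃^3) - 24*x₁*x₂*x₃*(x₁+x₂) = 0) :
    x₁ = 0 ∧ x₂ = 0 ∧ x₃ = 0 :=
  stmt_6_general x₁ x₂ x₃ h₁ h₂ h
end

section
/- For all nonnegative reals x₁, x₂, x₃, if (x₁+x₂+x₃)⁴ - 12(x₁²x₂² + x₁²x₃² + x₂²x₃²) - 12x₁x₂x₃(2x₁ + x₃) = 0, then x₁ = x₂ = x₃ = 0. -/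
/-! The quartic form is strictly copositive: on the nonnegative orthant it dominates
`(x₁ + x₂ + x₃)⁴ / 20` (its minimum on the standard simplex is about `0.068`). Hence it vanishes
there only where `x₁ + x₂ + x₃ = 0`, i.e. at the origin. -/

theorem sum_pow_four_div_twenty_le (x₁ x₂ x₃ : ℝ) (h₁ : 0 ≤ x₁) (h₂ : 0 ≤ x₂) (h₃ : 0 ≤ x₃) :
    (x₁+x₂+x₃)^4 / 20 ≤ (x₁+x₂+x₃)^4 - 12*(x₁^2*x₂^2 + x₁^2*x₃^2 + x₂^2*x₃^2)
        - 12*x₁*x₂*x₃*(2*x₁ + x₃) := by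
  nlinarith [mul_nonneg (mul_nonneg h₂ h₃) (sq_nonneg (2*x₂ - 2*x₃)),
    mul_nonneg (mul_nonneg h₁ h₂) (sq_nonneg (2*x₁ - 2*x₂ - x₃)),
    mul_nonneg (mul_nonneg h₁ h₃) (sq_nonneg (2*x₁ - 2*x₂ - x₃)),
    mul_nonneg (mul_nonneg h₁ h₃) (sq_nonneg (x₁ + 2*x₂ - 2*x₃)),
    mul_nonneg (mul_nonneg h₁ h₂) (sq_nonneg (2*x₁ - 2*x₂ - 2*x₃)),
    sq_nonneg (x₁^2 + x₁*x₂ - x₁*x₃ - x₂^2 + x₂*x₃ - x₃^2)]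

theorem stmt_7 (x₁ x₂ x₃ : ℝ) (h₁ : 0 ≤ x₁) (h₂ : 0 ≤ x₂) (h₃ : 0 ≤ x₃)
    (h : (x₁+x₂+x₃)^4 - 12*(x₁^2*x₂^2 + x₁^2*x₃^2 + x₂^2*x₃^2)
        - 12*x₁*x₂*x₃*(2*x₁ + x₃) = 0) :
    x₁ = 0 ∧ x₂ = 0 ∧ x₃ = 0 := by
  have hpow : (x₁+x₂+x₃)^4 = 0 :=
    le_antisymm (by linarith [sum_pow_four_div_twenty_le x₁ x₂ x₃ h₁ h₂ h₃]) (by positivity)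
  have hsum : x₁ + x₂ + x₃ = 0 := pow_eq_zero_iff (by norm_num) |>.mp hpow
  exact ⟨by linarith, by linarith, by linarith⟩
end

section
/- For all nonnegative reals x₁, x₂, x₃, if (x₁+x₂+x₃)⁴ - 12(x₁²x₂² + x₁²x₃² + x₂²x₃²) - 12x₁x₂x₃(x₁ + x₂ + x₃) = 0, then x₁ = x₂ = x₃ = 0. -/
/-!
Expanding `(x₁ + x₂ + x₃)⁴` turns the left-hand side into the sum of `xᵢ⁴`, four times the terms
`xᵢxⱼ(xᵢ - xⱼ)²` and twice the terms `xᵢ²xⱼ²`. For nonnegative `xᵢ` every summand is nonnegative, so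
the left-hand side vanishes only if every `xᵢ⁴` does.
-/

lemma quartic_form_eq (x y z : ℝ) :
    (x+y+z)^4 - 12*(x^2*y^2 + x^2*z^2 + y^2*z^2) - 12*x*y*z*(x + y + z) =
      x^4 + y^4 + z^4 + 4*(x*y*(x-y)^2 + x*z*(x-z)^2 + y*z*(y-z)^2)
        + 2*(x^2*y^2 + x^2*z^2 + y^2*z^2) := by
  ring

lemma sum_pow_four_le_quartic_form {x y z : ℝ} (hx : 0 ≤ x) (hy : 0 ≤ y) (hz : 0 ≤ z) :
    x^4 + y^4 + z^4 ≤
      (x+y+z)^4 - 12*(x^2*y^2 + x^2*z^2 + y^2*z^2) - 12*x*y*z*(x + y + z) := by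
  rw [quartic_form_eq]
  have : 0 ≤ 4*(x*y*(x-y)^2 + x*z*(x-z)^2 + y*z*(y-z)^2) + 2*(x^2*y^2 + x^2*z^2 + y^2*z^2) := by
    positivity
  linarith

theorem stmt_8 (x₁ x₂ x₃ : ℝ) (h₁ : 0 ≤ x₁) (h₂ : 0 ≤ x₂) (h₃ : 0 ≤ x₃)
    (h : (x₁+x₂+x₃)^4 - 12*(x₁^2*x₂^2 + x₁^2*x₃^2 + x₂^2*x₃^2)
        - 12*x₁*x₂*x₃*(x₁ + x₂ + x₃) = 0) :
    x₁ = 0 ∧ x₂ = 0 ∧ x₃ = 0 := by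
  have hsum : x₁^4 + x₂^4 + x₃^4 ≤ 0 := h ▸ sum_pow_four_le_quartic_form h₁ h₂ h₃
  have hx₁ := pow_nonneg h₁ 4
  have hx₂ := pow_nonneg h₂ 4
  have hx₃ := pow_nonneg h₃ 4
  refine ⟨?_, ?_, ?_⟩ <;> refine pow_eq_zero_iff (n := 4) (by norm_num) |>.mp ?_ <;> linarith
end

section
/- For all nonnegative reals x₁, x₂, x₃, if (x₁+x₂+x₃)⁴ - 6x₂²x₃² - 24x₁x₂x₃(x₁ + x₂ + x₃) = 0, then x₁ = x₂ = x₃ = 0. -/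
theorem stmt_9 (x₁ x₂ x₃ : ℝ) (h₁ : 0 ≤ x₁) (h₂ : 0 ≤ x₂) (h₃ : 0 ≤ x₃)
    (h : (x₁+x₂+x₃)^4 - 6*x₂^2*x₃^2 - 24*x₁*x₂*x₃*(x₁ + x₂ + x₃) = 0) :
    x₁ = 0 ∧ x₂ = 0 ∧ x₃ = 0 := by
  have hs : x₁ + x₂ + x₃ = 0 := by
    by_contra hne
    have hpos : 0 < x₁ + x₂ + x₃ := lt_of_le_of_ne (by linarith) (Ne.symm hne)
    nlinarith [sq_nonneg (x₂ - x₃), sq_nonneg (x₁ - x₂), sq_nonneg (x₁ - x₃),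
      sq_nonneg (x₂ + x₃ - 2*x₁), sq_nonneg (x₁ + x₂ + x₃), sq_nonneg (3*x₁ - x₂ - x₃),
      sq_nonneg (x₂*x₃ - x₁*x₂ - x₁*x₃), sq_nonneg (x₁^2 - x₂*x₃),
      sq_nonneg (x₂^2 - x₃^2), sq_nonneg (x₁*(x₂+x₃) - 2*x₂*x₃),
      mul_nonneg h₁ h₂, mul_nonneg h₂ h₃, mul_nonneg h₁ h₃,
      mul_nonneg (mul_nonneg h₁ h₂) h₃,
      mul_nonneg (mul_nonneg (mul_nonneg h₁ h₂) h₃) h₁,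
      mul_nonneg (mul_nonneg (mul_nonneg h₁ h₂) h₃) h₂,
      mul_nonneg (mul_nonneg (mul_nonneg h₁ h₂) h₃) h₃,
      mul_nonneg h₁ (sq_nonneg (x₂ - x₃)), mul_nonneg h₂ (sq_nonneg (x₁ - x₃)),
      mul_nonneg h₃ (sq_nonneg (x₁ - x₂)),
      mul_nonneg (mul_nonneg h₁ h₁) (sq_nonneg (x₂ - x₃)),
      mul_nonneg (mul_nonneg h₂ h₃) (sq_nonneg (x₂ - x₃)),
      mul_nonneg (mul_nonneg h₂ h₃) (sq_nonneg (x₂ + x₃ - 2*x₁)),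
      mul_pos hpos hpos]
  exact ⟨by linarith, by linarith, by linarith⟩
end

section
/- Let T = (t_{ijkl}) be a 4th-order 3-dimensional symmetric tensor with t_iiii = t_iiij = 1 and t_iijj = -1 for all distinct i, j ∈ {1,2,3}, and mixed entries t₁₁₂₃, t₁₂₂₃, t₁₂₃₃ ∈ {-1, 0, 1}. Then T is strictly copositive (i.e., Tx⁴ > 0 for all nonzero x ∈ ℝ³₊) if and only if t₁₁₂₃ + t₁₂₂₃ + t₁₂₃₃ ≥ 0. -/
/-!
At `x = (1,1,1)` the form equals `9 + 12 (t₁₁₂₃ + t₁₂₂₃ + t₁₂₃₃)`, and this sum is an integer,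
so strict copositivity forces it to be nonnegative.

Conversely, write the form as `Σ xᵢ⁴ + Q(x) + 12 x₁x₂x₃ ℓ(x)`, where `Q` collects the terms with
coefficients `t_iiij`, `t_iijj` and `ℓ` is the linear form with the mixed entries as coefficients.
If the mixed entries lie in `{-1, 0, 1}` and have nonnegative sum, at most one of them is `-1`
and then another one is `1`, so `ℓ(x) ≥ 0` or `ℓ(x) ≥ x_j - x_i` for some `i ≠ j`. Since `Q` is
symmetric, everything follows from the single inequality `Q(x) + 12 x₁x₂x₃ (x₃ - x₁) ≥ 0`
on the nonnegative orthant; adding it to its image under `x₁ ↔ x₃` gives `Q ≥ 0`.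
-/

def crossQuartic (x y z : ℝ) : ℝ :=
  4 * (x^3*y + x^3*z + x*y^3 + y^3*z + x*z^3 + y*z^3) - 6 * (x^2*y^2 + x^2*z^2 + y^2*z^2)

lemma crossQuartic_swap_left (x y z : ℝ) : crossQuartic y x z = crossQuartic x y z := by
  unfold crossQuartic; ring

lemma crossQuartic_swap_right (x y z : ℝ) : crossQuartic x z y = crossQuartic x y z := by
  unfold crossQuartic; ring

lemma crossQuartic_add_mul_sub_nonneg {x y z : ℝ} (hx : 0 ≤ x) (hy : 0 ≤ y) (hz : 0 ≤ z) :
    0 ≤ crossQuartic x y z + 12 * x * y * z * (z - x) := by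
  unfold crossQuartic
  nlinarith [mul_nonneg (mul_nonneg hx hy) (sq_nonneg (2*x + y - 3*z)),
    mul_nonneg (mul_nonneg hx hx) (sq_nonneg (y - 3*z)),
    mul_nonneg (mul_nonneg hx hy) (sq_nonneg (y - 3*z)),
    mul_nonneg (mul_nonneg hy hz) (sq_nonneg (y - 3*z)),
    mul_nonneg (mul_nonneg hx hy) (sq_nonneg (x - 2*y + z)),
    mul_nonneg (mul_nonneg hx hz) (sq_nonneg (x - 2*y + z)),
    mul_nonneg (mul_nonneg hy hz) (sq_nonneg (x - 2*y + z)),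
    mul_nonneg (mul_nonneg hy hz) (sq_nonneg (x - 3*y + 3*z)),
    mul_nonneg (mul_nonneg hy hz) (sq_nonneg (x + 3*y)),
    mul_nonneg (mul_nonneg hx hy) (sq_nonneg (3*x - 2*y - 3*z)),
    mul_nonneg (mul_nonneg hx hz) (sq_nonneg (3*x - 2*y - 3*z))]

lemma crossQuartic_add_mixed_nonneg {a b c x y z : ℝ}
    (ha : a = -1 ∨ a = 0 ∨ a = 1) (hb : b = -1 ∨ b = 0 ∨ b = 1) (hc : c = -1 ∨ c = 0 ∨ c = 1)
    (habc : 0 ≤ a + b + c) (hx : 0 ≤ x) (hy : 0 ≤ y) (hz : 0 ≤ z) :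
    0 ≤ crossQuartic x y z + 12 * x * y * z * (a * x + b * y + c * z) := by
  have hxz := crossQuartic_add_mul_sub_nonneg hx hy hz
  have hzx := crossQuartic_add_mul_sub_nonneg hz hy hx
  have hxy := crossQuartic_add_mul_sub_nonneg hx hz hy
  have hyx := crossQuartic_add_mul_sub_nonneg hy hz hx
  have hyz := crossQuartic_add_mul_sub_nonneg hy hx hz
  have hzy := crossQuartic_add_mul_sub_nonneg hz hx hy
  simp only [crossQuartic_swap_left, crossQuartic_swap_right] at hzx hxy hyx hyz hzy
  have hxyz : 0 ≤ x * y * z := by positivity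
  have hxyzx := mul_nonneg hxyz hx
  have hxyzy := mul_nonneg hxyz hy
  have hxyzz := mul_nonneg hxyz hz
  rcases ha with rfl | rfl | rfl <;> rcases hb with rfl | rfl | rfl <;>
    rcases hc with rfl | rfl | rfl <;> linarith

lemma pow_four_add_pow_four_add_pow_four_pos {x y z : ℝ} (h : ¬(x = 0 ∧ y = 0 ∧ z = 0)) :
    0 < x^4 + y^4 + z^4 := by
  by_contra! hle
  have hx : 0 ≤ x^4 := by positivity
  have hy : 0 ≤ y^4 := by positivity
  have hz : 0 ≤ z^4 := by positivity
  refine h ⟨?_, ?_, ?_⟩ <;> refine (pow_eq_zero_iff four_ne_zero).mp ?_ <;> linarith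

lemma exists_intCast_eq_of_mem_neg_one_zero_one {a : ℝ} (ha : a = -1 ∨ a = 0 ∨ a = 1) :
    ∃ n : ℤ, (n : ℝ) = a := by
  rcases ha with rfl | rfl | rfl
  exacts [⟨-1, by norm_num⟩, ⟨0, by norm_num⟩, ⟨1, by norm_num⟩]

theorem stmt_10 (a b c : ℝ)
    (ha : a = -1 ∨ a = 0 ∨ a = 1) (hb : b = -1 ∨ b = 0 ∨ b = 1)
    (hc : c = -1 ∨ c = 0 ∨ c = 1) :
    (∀ x₁ x₂ x₃ : ℝ, 0 ≤ x₁ → 0 ≤ x₂ → 0 ≤ x₃ → ¬(x₁ = 0 ∧ x₂ = 0 ∧ x₃ = 0) →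
      0 < x₁^4 + x₂^4 + x₃^4
          + 4*(x₁^3*x₂ + x₁^3*x₃ + x₁*x₂^3 + x₂^3*x₃ + x₁*x₃^3 + x₂*x₃^3)
          - 6*(x₁^2*x₂^2 + x₁^2*x₃^2 + x₂^2*x₃^2)
          + 12*(a*x₁^2*x₂*x₃ + b*x₁*x₂^2*x₃ + c*x₁*x₂*x₃^2)) ↔
    0 ≤ a + b + c := by
  constructor
  · intro h
    have h111 := h 1 1 1 zero_le_one zero_le_one zero_le_one (by norm_num)
    obtain ⟨i, rfl⟩ := exists_intCast_eq_of_mem_neg_one_zero_one ha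
    obtain ⟨j, rfl⟩ := exists_intCast_eq_of_mem_neg_one_zero_one hb
    obtain ⟨k, rfl⟩ := exists_intCast_eq_of_mem_neg_one_zero_one hc
    have hijk : (-1 : ℤ) < i + j + k := by exact_mod_cast (by linarith : (-1 : ℝ) < i + j + k)
    exact_mod_cast (by omega : 0 ≤ i + j + k)
  · intro habc x₁ x₂ x₃ h₁ h₂ h₃ hne
    have hfourth := pow_four_add_pow_four_add_pow_four_pos hne
    have hrest := crossQuartic_add_mixed_nonneg ha hb hc habc h₁ h₂ h₃
    unfold crossQuartic at hrest
    linarith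
end

section
/- Let T = (t_{ijkl}) be a 4th-order 3-dimensional symmetric tensor with t_iiii = t_iiij = 1 for all distinct i,j, t_iijk = -1 for all distinct i,j,k, and t₁₁₂₂, t₁₁₃₃, t₂₂₃₃ ∈ {-1, 0, 1}. Then T is strictly copositive if and only if each of t₁₁₂₂, t₁₁₃₃, t₂₂₃₃ lies in {0, 1} and at least two of them equal 1. -/
private theorem key2 (u s : ℝ) (hu : 0 ≤ u) (hus : u ≤ s) (hs : 0 < s) :
    6*(s-u)*u^2*s + (3/8)*u^4 < s^4 := by
  have h1 : 0 ≤ s - u := by linarith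
  rcases le_or_gt (10*u) (7*s) with h | h
  · nlinarith [sq_nonneg (s-u), sq_nonneg (10*u-7*s), mul_nonneg hu h1, mul_nonneg (mul_nonneg hu hu) h1, mul_pos hs hs, sq_nonneg u, sq_nonneg (2*s-3*u), mul_nonneg (mul_nonneg hu hu) hu]
  · nlinarith [sq_nonneg (s-u), sq_nonneg (10*u-7*s), mul_nonneg hu h1, mul_nonneg (mul_nonneg h1 h1) h1, mul_pos hs hs, sq_nonneg u, mul_nonneg (mul_nonneg hu hu) h1, mul_nonneg h1 hs.le]

private theorem key (a b c : ℝ) (ha : 0 ≤ a) (hb : 0 ≤ b) (hc : 0 ≤ c)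
    (hs : 0 < a + b + c) :
    24*a*b*c*(a+b+c) + 6*b^2*c^2 < (a+b+c)^4 := by
  have hbc : 0 ≤ b*c := mul_nonneg hb hc
  have h4 : b*c ≤ (b+c)^2/4 := by nlinarith [sq_nonneg (b-c)]
  have h2 := key2 (b+c) (a+b+c) (by linarith) (by linarith) hs
  have has : 0 ≤ a * (a+b+c) := mul_nonneg ha hs.le
  nlinarith [mul_le_mul_of_nonneg_left h4 has, sq_nonneg (b+c), mul_nonneg hbc hbc, mul_le_mul h4 h4 hbc (by positivity : (0:ℝ) ≤ (b+c)^2/4)]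

theorem stmt_11 (p q r : ℝ)
    (hp : p = -1 ∨ p = 0 ∨ p = 1) (hq : q = -1 ∨ q = 0 ∨ q = 1)
    (hr : r = -1 ∨ r = 0 ∨ r = 1) :
    (∀ x₁ x₂ x₃ : ℝ, 0 ≤ x₁ → 0 ≤ x₂ → 0 ≤ x₃ → ¬(x₁ = 0 ∧ x₂ = 0 ∧ x₃ = 0) →
      0 < x₁^4 + x₂^4 + x₃^4
          + 4*(x₁^3*x₂ + x₁^3*x₃ + x₁*x₂^3 + x₂^3*x₃ + x₁*x₃^3 + x₂*x₃^3)
          + 6*(p*x₁^2*x₂^2 + q*x₁^2*x₃^2 + r*x₂^2*x₃^2)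
          - 12*(x₁^2*x₂*x₃ + x₁*x₂^2*x₃ + x₁*x₂*x₃^2)) ↔
    ((p = 0 ∨ p = 1) ∧ (q = 0 ∨ q = 1) ∧ (r = 0 ∨ r = 1) ∧
      ((p = 1 ∧ q = 1) ∨ (p = 1 ∧ r = 1) ∨ (q = 1 ∧ r = 1))) := by
  constructor
  · intro h
    have h1 := h 1 1 1 zero_le_one zero_le_one zero_le_one (by norm_num)
    norm_num at h1
    have hsum : 3/2 < p + q + r := by linarith
    rcases hp with hp | hp | hp <;> rcases hq with hq | hq | hq <;>
      rcases hr with hr | hr | hr <;> subst hp <;> subst hq <;> subst hr <;>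
      norm_num at hsum <;> norm_num
  · rintro ⟨hp', hq', hr', hcase⟩
    intro x₁ x₂ x₃ h1 h2 h3 hne
    have hs : 0 < x₁ + x₂ + x₃ := by
      rcases lt_or_eq_of_le h1 with h | h
      · linarith
      rcases lt_or_eq_of_le h2 with h' | h'
      · linarith
      rcases lt_or_eq_of_le h3 with h'' | h''
      · linarith
      exact absurd ⟨h.symm, h'.symm, h''.symm⟩ hne
    rcases hcase with ⟨hP, hQ⟩ | ⟨hP, hR⟩ | ⟨hQ, hR⟩
    · -- p = 1, q = 1, r ∈ {0,1}
      subst hP; subst hQ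
      rcases hr' with hR | hR <;> subst hR
      · have := key x₁ x₂ x₃ h1 h2 h3 hs
        nlinarith [this]
      · have := key x₁ x₂ x₃ h1 h2 h3 hs
        nlinarith [this, sq_nonneg (x₂*x₃)]
    · -- p = 1, r = 1, q ∈ {0,1}
      subst hP; subst hR
      rcases hq' with hQ | hQ <;> subst hQ
      · have := key x₂ x₁ x₃ h2 h1 h3 (by linarith)
        nlinarith [this]
      · have := key x₂ x₁ x₃ h2 h1 h3 (by linarith)
        nlinarith [this, sq_nonneg (x₁*x₃)]
    · -- q = 1, r = 1, p ∈ {0,1}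
      subst hQ; subst hR
      rcases hp' with hP | hP <;> subst hP
      · have := key x₃ x₁ x₂ h3 h1 h2 (by linarith)
        nlinarith [this]
      · have := key x₃ x₁ x₂ h3 h1 h2 (by linarith)
        nlinarith [this, sq_nonneg (x₁*x₂)]
end

section
/- Let T be a 4th-order 3-dimensional symmetric tensor with t_iiii ≥ 1, t_iiij ≥ 1, t_iijj ≥ -1, and t_iijk ≥ 0 for all distinct i, j, k ∈ {1,2,3}. Then T is strictly copositive, i.e., Tx⁴ > 0 for all nonzero x ∈ ℝ³₊. -/
theorem stmt_12 (t : Fin 3 → Fin 3 → Fin 3 → Fin 3 → ℝ)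
    (hs1 : ∀ i j k l, t i j k l = t j i k l)
    (hs2 : ∀ i j k l, t i j k l = t i k j l)
    (hs3 : ∀ i j k l, t i j k l = t i j l k)
    (h1 : ∀ i, 1 ≤ t i i i i)
    (h2 : ∀ i j, i ≠ j → 1 ≤ t i i i j)
    (h3 : ∀ i j, i ≠ j → -1 ≤ t i i j j)
    (h4 : ∀ i j k, i ≠ j → i ≠ k → j ≠ k → 0 ≤ t i i j k) :
    ∀ x : Fin 3 → ℝ, (∀ i, 0 ≤ x i) → x ≠ 0 →
      0 < ∑ i : Fin 3, ∑ j : Fin 3, ∑ k : Fin 3, ∑ l : Fin 3,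
            t i j k l * x i * x j * x k * x l := by
  intro x hx hne
  have ha := hx 0
  have hb := hx 1
  have hc := hx 2
  -- positivity of the sum of coordinates
  obtain ⟨i, hi⟩ := Function.ne_iff.mp hne
  have hxi : 0 < x i := lt_of_le_of_ne (hx i) (Ne.symm hi)
  have hsum : 0 < x 0 + x 1 + x 2 := by fin_cases i <;> simp at hxi <;> linarith
  -- canonicalized entry bounds
  have e0000 := h1 0
  have e1111 := h1 1
  have e2222 := h1 2
  have e0001 := h2 0 1 (by decide)
  have e0002 := h2 0 2 (by decide)
  have e0111 := h2 1 0 (by decide)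
  have e1112 := h2 1 2 (by decide)
  have e0222 := h2 2 0 (by decide)
  have e1222 := h2 2 1 (by decide)
  have e0011 := h3 0 1 (by decide)
  have e0022 := h3 0 2 (by decide)
  have e1122 := h3 1 2 (by decide)
  have e0012 := h4 0 1 2 (by decide) (by decide) (by decide)
  have e0112 := h4 1 0 2 (by decide) (by decide) (by decide)
  have e0122 := h4 2 0 1 (by decide) (by decide) (by decide)
  simp only [hs1, hs2, hs3] at e0111 e1112 e0222 e1222 e0112 e0122 ⊢
  simp only [Fin.sum_univ_three]
  simp only [hs1, hs2, hs3]
  have hQ : 0 < x 0^4 + x 1^4 + x 2^4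
      + 4*(x 0^3*x 1 + x 0^3*x 2 + x 0*x 1^3 + x 1^3*x 2 + x 0*x 2^3 + x 1*x 2^3)
      - 6*(x 0^2*x 1^2 + x 0^2*x 2^2 + x 1^2*x 2^2) := by
    nlinarith [sq_nonneg (x 0 + x 1), sq_nonneg (x 1 + x 2), sq_nonneg (x 0 + x 2),
      sq_nonneg (x 0 - x 1), sq_nonneg (x 1 - x 2), sq_nonneg (x 0 - x 2),
      mul_nonneg ha hb, mul_nonneg hb hc, mul_nonneg ha hc,
      mul_pos hsum hsum, mul_nonneg (mul_nonneg ha hb) hc,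
      sq_nonneg (x 0^2 - x 1^2), sq_nonneg (x 1^2 - x 2^2), sq_nonneg (x 0^2 - x 2^2)]
  linarith [hQ,
    mul_nonneg (sub_nonneg.2 e0000) (pow_nonneg ha 4),
    mul_nonneg (sub_nonneg.2 e1111) (pow_nonneg hb 4),
    mul_nonneg (sub_nonneg.2 e2222) (pow_nonneg hc 4),
    mul_nonneg (sub_nonneg.2 e0001) (mul_nonneg (pow_nonneg ha 3) hb),
    mul_nonneg (sub_nonneg.2 e0002) (mul_nonneg (pow_nonneg ha 3) hc),
    mul_nonneg (sub_nonneg.2 e0111) (mul_nonneg ha (pow_nonneg hb 3)),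
    mul_nonneg (sub_nonneg.2 e1112) (mul_nonneg (pow_nonneg hb 3) hc),
    mul_nonneg (sub_nonneg.2 e0222) (mul_nonneg ha (pow_nonneg hc 3)),
    mul_nonneg (sub_nonneg.2 e1222) (mul_nonneg hb (pow_nonneg hc 3)),
    mul_nonneg (by linarith : (0:ℝ) ≤ t 0 0 1 1 + 1) (mul_nonneg (pow_nonneg ha 2) (pow_nonneg hb 2)),
    mul_nonneg (by linarith : (0:ℝ) ≤ t 0 0 2 2 + 1) (mul_nonneg (pow_nonneg ha 2) (pow_nonneg hc 2)),
    mul_nonneg (by linarith : (0:ℝ) ≤ t 1 1 2 2 + 1) (mul_nonneg (pow_nonneg hb 2) (pow_nonneg hc 2)),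
    mul_nonneg e0012 (mul_nonneg (mul_nonneg (pow_nonneg ha 2) hb) hc),
    mul_nonneg e0112 (mul_nonneg (mul_nonneg ha (pow_nonneg hb 2)) hc),
    mul_nonneg e0122 (mul_nonneg (mul_nonneg ha hb) (pow_nonneg hc 2))]
end

section
/- Let T be a 4th-order 2-dimensional symmetric tensor with all entries in {-1, 1}, with quartic form Tx⁴ = t₁₁₁₁x₁⁴ + 4t₁₁₁₂x₁³x₂ + 6t₁₁₂₂x₁²x₂² + 4t₁₂₂₂x₁x₂³ + t₂₂₂₂x₂⁴. Then T is strictly copositive (Tx⁴ > 0 for all nonzero nonnegative (x₁,x₂)) if and only if t₁₁₁₁ = t₂₂₂₂ = 1 and either (t₁₁₁₂ = t₁₂₂₂ = 1) or (t₁₁₁₂t₁₂₂₂ = -1 and t₁₁₂₂ = 1). -/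
/-- If the quartic form is ≤ 0 at some admissible point, it is not strictly copositive. -/
theorem quartic_not_cop {c0 c1 c2 c3 c4 : ℝ} (a b : ℝ) (ha : 0 ≤ a) (hb : 0 ≤ b)
    (hne : ¬(a = 0 ∧ b = 0))
    (hv : c0*a^4 + 4*c1*a^3*b + 6*c2*a^2*b^2 + 4*c3*a*b^3 + c4*b^4 ≤ 0) :
    ¬(∀ x₁ x₂ : ℝ, 0 ≤ x₁ → 0 ≤ x₂ → ¬(x₁ = 0 ∧ x₂ = 0) →
      0 < c0*x₁^4 + 4*c1*x₁^3*x₂ + 6*c2*x₁^2*x₂^2 + 4*c3*x₁*x₂^3 + c4*x₂^4) :=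
  fun h => absurd (h a b ha hb hne) (not_lt.2 hv)

theorem stmt_14 (t1111 t1112 t1122 t1222 t2222 : ℝ)
    (h1 : t1111 = 1 ∨ t1111 = -1) (h2 : t1112 = 1 ∨ t1112 = -1)
    (h3 : t1122 = 1 ∨ t1122 = -1) (h4 : t1222 = 1 ∨ t1222 = -1)
    (h5 : t2222 = 1 ∨ t2222 = -1) :
    (∀ x₁ x₂ : ℝ, 0 ≤ x₁ → 0 ≤ x₂ → ¬(x₁ = 0 ∧ x₂ = 0) →
      0 < t1111*x₁^4 + 4*t1112*x₁^3*x₂ + 6*t1122*x₁^2*x₂^2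
          + 4*t1222*x₁*x₂^3 + t2222*x₂^4) ↔
    (t1111 = 1 ∧ t2222 = 1 ∧
      ((t1112 = 1 ∧ t1222 = 1) ∨ (t1112*t1222 = -1 ∧ t1122 = 1))) := by
  rcases h1 with rfl | rfl <;> rcases h2 with rfl | rfl <;>
    rcases h3 with rfl | rfl <;> rcases h4 with rfl | rfl <;>
    rcases h5 with rfl | rfl
  all_goals first
    | (refine iff_of_false (quartic_not_cop 1 0 ?_ ?_ ?_ ?_) ?_ <;> (norm_num; done))
    | (refine iff_of_false (quartic_not_cop 0 1 ?_ ?_ ?_ ?_) ?_ <;> (norm_num; done))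
    | (refine iff_of_false (quartic_not_cop 1 1 ?_ ?_ ?_ ?_) ?_ <;> (norm_num; done))
    | (apply iff_of_true _ (by norm_num)
       intro x y hx hy hne
       rcases hx.lt_or_eq with hx' | hx' <;> rcases hy.lt_or_eq with hy' | hy'
       · nlinarith [mul_pos (mul_pos hx' hy') (mul_pos hx' hy'),
           mul_nonneg (mul_nonneg hx hy) (sq_nonneg (x - y)),
           sq_nonneg ((x - y)^2), sq_nonneg (x^2 - y^2 + 2*x*y),
           sq_nonneg (x^2 - y^2 - 2*x*y), pow_pos (add_pos hx' hy') 4]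
       · subst hy'; nlinarith [pow_pos hx' 4]
       · subst hx'; nlinarith [pow_pos hy' 4]
       · exact absurd ⟨hx'.symm, hy'.symm⟩ hne)
end

section
/- Suppose an mth-order n-dimensional symmetric tensor T = (t_{i₁...i_m}) is copositive (i.e., Tx^m ≥ 0 for all x ∈ ℝⁿ₊). If t_{ii...i} = 0 for some index i, then t_{ii...ij} ≥ 0 for all j. -/
theorem stmt_17 (m n : ℕ) (t : (Fin m → Fin n) → ℝ)
    (hsym : ∀ (σ : Equiv.Perm (Fin m)) (f : Fin m → Fin n), t (f ∘ σ) = t f)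
    (hcop : ∀ x : Fin n → ℝ, (∀ j, 0 ≤ x j) →
      0 ≤ ∑ f : Fin m → Fin n, t f * ∏ k : Fin m, x (f k))
    (i : Fin n) (hzero : t (fun _ => i) = 0) :
    ∀ j : Fin n, ∀ p : Fin m, 0 ≤ t (Function.update (fun _ => i) p j) := by
  classical
  intro j p
  by_cases hji : j = i
  · rw [show Function.update (fun _ => i) p j = (fun _ => i) from by
      rw [hji]; exact Function.update_eq_self p _]
    exact hzero.ge
  by_contra hlt
  push_neg at hlt
  set a := t (Function.update (fun _ => i) p j) with ha
  set C := ∑ f : Fin m → Fin n, |t f| with hC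
  have hC0 : 0 ≤ C := Finset.sum_nonneg fun f _ => abs_nonneg _
  set ε := min 1 ((-a) / (2 * (C + 1))) with hε
  have hεpos : 0 < ε := lt_min one_pos (div_pos (by linarith) (by linarith))
  have hε1 : ε ≤ 1 := min_le_left _ _
  have hε2 : ε * (2 * (C + 1)) ≤ -a := by
    have := min_le_right 1 ((-a) / (2 * (C + 1)))
    rw [hε]
    calc min 1 ((-a) / (2 * (C + 1))) * (2 * (C + 1))
        ≤ ((-a) / (2 * (C + 1))) * (2 * (C + 1)) := by
          apply mul_le_mul_of_nonneg_right this (by linarith)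
      _ = -a := by field_simp
  -- the test vector
  set x : Fin n → ℝ := fun l => if l = j then ε else if l = i then 1 else 0 with hx
  have hxnn : ∀ l, 0 ≤ x l := by
    intro l
    simp only [hx]
    split_ifs <;> linarith
  have hS := hcop x hxnn
  -- product formula
  have hprod : ∀ f : Fin m → Fin n,
      (∏ k : Fin m, x (f k)) =
        if (∀ k, f k = i ∨ f k = j) then
          ε ^ (Finset.univ.filter fun k => f k = j).card else 0 := by
    intro f
    by_cases hg : ∀ k, f k = i ∨ f k = j
    · rw [if_pos hg]
      have hfac : ∀ k : Fin m, x (f k) = if f k = j then ε else 1 := by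
        intro k
        rcases hg k with h | h
        · simp [hx, h, Ne.symm hji]
        · simp [hx, h]
      rw [Finset.prod_congr rfl fun k _ => hfac k, Finset.prod_ite]
      simp
    · rw [if_neg hg]
      push_neg at hg
      obtain ⟨k, hk1, hk2⟩ := hg
      exact Finset.prod_eq_zero (Finset.mem_univ k) (by simp [hx, hk1, hk2])
  -- rewrite the sum
  set G : Finset (Fin m → Fin n) :=
    Finset.univ.filter (fun f => ∀ k, f k = i ∨ f k = j) with hG
  set N : (Fin m → Fin n) → ℕ :=
    fun f => (Finset.univ.filter fun k => f k = j).card with hN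
  have hSsum : (∑ f : Fin m → Fin n, t f * ∏ k : Fin m, x (f k))
      = ∑ f ∈ G, t f * ε ^ N f := by
    rw [hG, Finset.sum_filter]
    apply Finset.sum_congr rfl
    intro f _
    rw [hprod f]
    by_cases hg : ∀ k, f k = i ∨ f k = j <;> simp [hg, hN]
  rw [hSsum] at hS
  -- split by N f = 1
  rw [← Finset.sum_filter_add_sum_filter_not G (fun f => N f = 1)] at hS
  -- all terms with N f = 1 equal a * ε
  have hone : ∀ f ∈ G.filter (fun f => N f = 1), t f * ε ^ N f = a * ε := by
    intro f hf
    rw [Finset.mem_filter] at hf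
    obtain ⟨hfG, hN1⟩ := hf
    rw [hG, Finset.mem_filter] at hfG
    have hg := hfG.2
    obtain ⟨q, hq⟩ := Finset.card_eq_one.mp hN1
    have hfq : ∀ k, f k = j ↔ k = q := by
      intro k
      constructor
      · intro h
        have : k ∈ Finset.univ.filter fun k => f k = j := by
          simp [h]
        rw [hq, Finset.mem_singleton] at this
        exact this
      · intro h
        have : q ∈ Finset.univ.filter fun k => f k = j := by
          rw [hq]; exact Finset.mem_singleton_self q
        rw [Finset.mem_filter] at this
        rw [h]; exact this.2
    have hfeq : f = Function.update (fun _ => i) q j := by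
      funext k
      by_cases hkq : k = q
      · subst hkq
        rw [Function.update_self]
        exact (hfq k).mpr rfl
      · rw [Function.update_of_ne hkq]
        rcases hg k with h | h
        · exact h
        · exact absurd ((hfq k).mp h) hkq
    have hta : t f = a := by
      rw [hfeq, ha]
      have hcomp : (Function.update (fun _ => i) p j) ∘ (Equiv.swap q p)
          = Function.update (fun _ => i) q j := by
        funext k
        simp only [Function.comp_apply]
        by_cases hkq : k = q
        · subst hkq
          rw [Equiv.swap_apply_left, Function.update_self, Function.update_self]
        · rw [Function.update_of_ne hkq]
          by_cases hkp : k = p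
          · subst hkp
            rw [Equiv.swap_apply_right]
            rw [Function.update_of_ne (fun h => hkq h.symm)]
          · rw [Equiv.swap_apply_of_ne_of_ne hkq hkp, Function.update_of_ne hkp]
      rw [← hcomp, hsym]
    rw [hta, hN1, pow_one]
  -- count of N f = 1 terms is at least 1
  have hmem : Function.update (fun _ => i) p j ∈ G.filter (fun f => N f = 1) := by
    rw [Finset.mem_filter]
    constructor
    · rw [hG, Finset.mem_filter]
      refine ⟨Finset.mem_univ _, fun k => ?_⟩
      by_cases hkp : k = p
      · subst hkp; right; exact Function.update_self _ _ _
      · left; exact Function.update_of_ne hkp _ _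
    · show (Finset.univ.filter fun k => Function.update (fun _ => i) p j k = j).card = 1
      have : (Finset.univ.filter fun k => Function.update (fun _ => i) p j k = j)
          = {p} := by
        ext k
        simp only [Finset.mem_filter, Finset.mem_univ, true_and, Finset.mem_singleton]
        constructor
        · intro h
          by_contra hkp
          rw [Function.update_of_ne hkp] at h
          exact hji h.symm
        · intro h; subst h; exact Function.update_self _ _ _
      rw [this, Finset.card_singleton]
  have hcard : 1 ≤ ((G.filter (fun f => N f = 1)).card : ℝ) := by
    have := Finset.card_pos.mpr ⟨_, hmem⟩
    exact_mod_cast this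
  have hsum1 : ∑ f ∈ G.filter (fun f => N f = 1), t f * ε ^ N f
      = ((G.filter (fun f => N f = 1)).card : ℝ) * (a * ε) := by
    rw [Finset.sum_congr rfl hone, Finset.sum_const, nsmul_eq_mul]
  -- bound the remaining terms
  have hrest : ∑ f ∈ G.filter (fun f => ¬ N f = 1), t f * ε ^ N f ≤ C * ε ^ 2 := by
    calc ∑ f ∈ G.filter (fun f => ¬ N f = 1), t f * ε ^ N f
        ≤ ∑ f ∈ G.filter (fun f => ¬ N f = 1), |t f| * ε ^ 2 := by
          apply Finset.sum_le_sum
          intro f hf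
          rw [Finset.mem_filter] at hf
          obtain ⟨hfG, hN1⟩ := hf
          rw [hG, Finset.mem_filter] at hfG
          by_cases hN0 : N f = 0
          · -- f = const i, so t f = 0
            have hfc : f = (fun _ => i) := by
              funext k
              rcases hfG.2 k with h | h
              · exact h
              · exfalso
                have : k ∈ Finset.univ.filter fun k => f k = j := by simp [h]
                rw [hN] at hN0
                rw [Finset.card_eq_zero.mp hN0] at this
                exact absurd this (Finset.notMem_empty k)
            rw [hfc, hzero, zero_mul]
            positivity
          · have h2 : 2 ≤ N f := by omega
            calc t f * ε ^ N f ≤ |t f| * ε ^ N f := by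
                  apply mul_le_mul_of_nonneg_right (le_abs_self _) (by positivity)
              _ ≤ |t f| * ε ^ 2 :=
                  mul_le_mul_of_nonneg_left
                    (pow_le_pow_of_le_one hεpos.le hε1 h2) (abs_nonneg _)
      _ = (∑ f ∈ G.filter (fun f => ¬ N f = 1), |t f|) * ε ^ 2 := by
          rw [← Finset.sum_mul]
      _ ≤ C * ε ^ 2 := by
          apply mul_le_mul_of_nonneg_right _ (by positivity)
          rw [hC]
          apply Finset.sum_le_sum_of_subset_of_nonneg (Finset.subset_univ _)
          intro f _ _
          exact abs_nonneg _
  rw [hsum1] at hS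
  -- conclude
  set c : ℝ := ((G.filter (fun f => N f = 1)).card : ℝ)
  have hca : c * (a * ε) ≤ 1 * (a * ε) := by
    apply mul_le_mul_of_nonpos_right hcard
    exact mul_nonpos_of_nonpos_of_nonneg hlt.le hεpos.le
  have hfinal : 0 ≤ a * ε + C * ε ^ 2 := by nlinarith [hS, hrest]
  nlinarith [mul_le_mul_of_nonneg_right hε2 hεpos.le, sq_nonneg ε,
    mul_pos hεpos hεpos]
end

section
/- A symmetric 2×2 real matrix M = (m_{ij}) satisfies xᵀMx > 0 for all nonzero x ∈ ℝ²₊ if and only if m₁₁ > 0, m₂₂ > 0, and m₁₂ + √(m₁₁m₂₂) > 0. -/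
theorem stmt_18 (M : Matrix (Fin 2) (Fin 2) ℝ) (hsym : M.IsSymm) :
    (∀ x : Fin 2 → ℝ, (∀ i, 0 ≤ x i) → x ≠ 0 →
      0 < M 0 0 * (x 0)^2 + 2 * M 0 1 * x 0 * x 1 + M 1 1 * (x 1)^2) ↔
    (0 < M 0 0 ∧ 0 < M 1 1 ∧ 0 < M 0 1 + Real.sqrt (M 0 0 * M 1 1)) := by
  set a := M 0 0 with ha'
  set b := M 0 1 with hb'
  set c := M 1 1 with hc'
  constructor
  · intro h
    have ha : 0 < a := by
      have := h ![1,0] (by intro i; fin_cases i <;> norm_num)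
        (by intro hx; have := congrFun hx 0; simp at this)
      simpa using this
    have hc : 0 < c := by
      have := h ![0,1] (by intro i; fin_cases i <;> norm_num)
        (by intro hx; have := congrFun hx 1; simp at this)
      simpa using this
    refine ⟨ha, hc, ?_⟩
    have hs : 0 < Real.sqrt (a*c) := Real.sqrt_pos.mpr (mul_pos ha hc)
    have hs2 : Real.sqrt (a*c) ^ 2 = a*c := Real.sq_sqrt (mul_pos ha hc).le
    have hsa : Real.sqrt a * Real.sqrt c = Real.sqrt (a*c) := (Real.sqrt_mul ha.le c).symm
    have hsc : 0 < Real.sqrt c := Real.sqrt_pos.mpr hc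
    have hsa' : 0 < Real.sqrt a := Real.sqrt_pos.mpr ha
    have ha2 : Real.sqrt a ^ 2 = a := Real.sq_sqrt ha.le
    have hc2 : Real.sqrt c ^ 2 = c := Real.sq_sqrt hc.le
    have hq := h ![Real.sqrt c, Real.sqrt a]
      (by intro i; fin_cases i <;> simp [Real.sqrt_nonneg])
      (by intro hx
          have h0 : Real.sqrt c = 0 := by simpa using congrFun hx 0
          exact absurd h0 (ne_of_gt hsc))
    simp only [Matrix.cons_val_zero, Matrix.cons_val_one, Matrix.head_cons] at hq
    nlinarith [hq, hs, hs2, hsa, ha2, hc2, mul_pos hsa' hsc]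
  · rintro ⟨ha, hc, h3⟩ x hx hne
    have hx0 := hx 0
    have hx1 := hx 1
    have hor : 0 < x 0 ∨ 0 < x 1 := by
      by_contra hcon
      push_neg at hcon
      apply hne
      funext i
      fin_cases i
      · exact le_antisymm hcon.1 hx0
      · exact le_antisymm hcon.2 hx1
    have hs : 0 < Real.sqrt (a*c) := Real.sqrt_pos.mpr (mul_pos ha hc)
    have hsa : Real.sqrt a * Real.sqrt c = Real.sqrt (a*c) := (Real.sqrt_mul ha.le c).symm
    have ha2 : Real.sqrt a ^ 2 = a := Real.sq_sqrt ha.le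
    have hc2 : Real.sqrt c ^ 2 = c := Real.sq_sqrt hc.le
    have expand : (Real.sqrt a * x 0 - Real.sqrt c * x 1)^2 =
        Real.sqrt a ^ 2 * x 0 ^ 2 - 2 * (Real.sqrt a * Real.sqrt c) * (x 0 * x 1)
          + Real.sqrt c ^ 2 * x 1 ^ 2 := by ring
    rw [ha2, hc2, hsa] at expand
    have key : 2 * Real.sqrt (a*c) * (x 0 * x 1) ≤ a * x 0 ^ 2 + c * x 1 ^ 2 := by
      have h := sq_nonneg (Real.sqrt a * x 0 - Real.sqrt c * x 1)
      rw [expand] at h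
      linarith
    rcases hx0.lt_or_eq with h0 | h0 <;> rcases hx1.lt_or_eq with h1 | h1
    · nlinarith [key, mul_pos h3 (mul_pos h0 h1)]
    · rw [← h1]
      ring_nf
      nlinarith [mul_pos ha (mul_pos h0 h0)]
    · rw [← h0]
      ring_nf
      nlinarith [mul_pos hc (mul_pos h1 h1)]
    · rcases hor with h | h <;> linarith
end
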